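/- arXiv:1303.2376 — 2 statements merged into one kernel-verified Lean document; each statement's English description precedes it below -/
import Mathlib

section
/- Let G be a finitely generated torsion-free nilpotent group. Then the quotient G/Z(G) is torsion-free. -/
/-- A monoid is torsion-free if no nontrivial element has finite order
(the Mathlib definition of December 2024, since removed). -/
def Monoid.IsTorsionFree (G : Type*) [Monoid G] : Prop :=
  ∀ g : G, g ≠ 1 → ¬IsOfFinOrder g

private lemma pow_comm_identity {Q : Type*} [Group Q] (a b : Q)
    (hc : a * (a * b * a⁻¹ * b⁻¹) = (a * b * a⁻¹ * b⁻¹) * a) :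
    ∀ n : ℕ, a ^ n * b * (a ^ n)⁻¹ = (a * b * a⁻¹ * b⁻¹) ^ n * b := by
  have hC : Commute a (a * b * a⁻¹ * b⁻¹) := hc
  intro n
  induction n with
  | zero => simp
  | succ n ih =>
    have hpow : a * (a * b * a⁻¹ * b⁻¹) ^ n = (a * b * a⁻¹ * b⁻¹) ^ n * a :=
      (hC.pow_right n)
    calc a ^ (n + 1) * b * (a ^ (n + 1))⁻¹
        = a * (a ^ n * b * (a ^ n)⁻¹) * a⁻¹ := by rw [pow_succ']; group
      _ = a * ((a * b * a⁻¹ * b⁻¹) ^ n * b) * a⁻¹ := by rw [ih]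
      _ = (a * b * a⁻¹ * b⁻¹) ^ n * (a * b * a⁻¹) := by
          rw [← mul_assoc, hpow]; group
      _ = (a * b * a⁻¹ * b⁻¹) ^ n * ((a * b * a⁻¹ * b⁻¹) * b) := by group
      _ = (a * b * a⁻¹ * b⁻¹) ^ (n + 1) * b := by rw [pow_succ]; group

private lemma malcev_key {G : Type*} [Group G] (htf : Monoid.IsTorsionFree G) :
    ∀ j : ℕ, ∀ g : G, ∀ n : ℕ, n ≠ 0 →
      g ∈ Subgroup.upperCentralSeries G (j + 1) → g ^ n ∈ Subgroup.upperCentralSeries G j →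
      g ∈ Subgroup.upperCentralSeries G j := by
  intro j
  induction j with
  | zero =>
    intro g n hn _ hpow
    rw [upperCentralSeries_zero, Subgroup.mem_bot] at hpow ⊢
    by_contra hg
    exact htf g hg (isOfFinOrder_iff_pow_eq_one.mpr ⟨n, Nat.pos_of_ne_zero hn, hpow⟩)
  | succ j ih =>
    intro g n hn hg hpow
    rw [mem_upperCentralSeries_succ_iff]
    intro y
    have hNorm : (Subgroup.upperCentralSeries G j).Normal := inferInstance
    set c : G := g * y * g⁻¹ * y⁻¹ with hc
    have hcmem : c ∈ Subgroup.upperCentralSeries G (j + 1) :=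
      (mem_upperCentralSeries_succ_iff.mp hg) y
    -- c commutes with g modulo ucs j
    have h1 : c * g * c⁻¹ * g⁻¹ ∈ Subgroup.upperCentralSeries G j :=
      (mem_upperCentralSeries_succ_iff.mp hcmem) g
    have h2 : ((c * g * c⁻¹ * g⁻¹ : G) : G ⧸ Subgroup.upperCentralSeries G j) = 1 :=
      (QuotientGroup.eq_one_iff _).mpr h1
    have h3 : (g : G ⧸ Subgroup.upperCentralSeries G j) * c = (c : G ⧸ Subgroup.upperCentralSeries G j) * g := by
      simp only [QuotientGroup.mk_mul, QuotientGroup.mk_inv] at h2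
      exact (commutatorElement_eq_one_iff_mul_comm.mp (by rw [commutatorElement_def]; exact h2)).symm
    have hc' : ((g : G ⧸ Subgroup.upperCentralSeries G j) * y * (g : G ⧸ Subgroup.upperCentralSeries G j)⁻¹ *
        (y : G ⧸ Subgroup.upperCentralSeries G j)⁻¹) = (c : G ⧸ Subgroup.upperCentralSeries G j) := by
      simp [hc]
    have hkey := pow_comm_identity (g : G ⧸ Subgroup.upperCentralSeries G j) (y : G) (by rw [hc']; exact h3) n
    rw [hc'] at hkey
    -- g^n commutes with y mod ucs j
    have h4 : g ^ n * y * (g ^ n)⁻¹ * y⁻¹ ∈ Subgroup.upperCentralSeries G j :=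
      (mem_upperCentralSeries_succ_iff.mp hpow) y
    have h5 : ((g ^ n * y * (g ^ n)⁻¹ * y⁻¹ : G) : G ⧸ Subgroup.upperCentralSeries G j) = 1 :=
      (QuotientGroup.eq_one_iff _).mpr h4
    simp only [QuotientGroup.mk_mul, QuotientGroup.mk_inv, QuotientGroup.mk_pow] at h5
    have h6 : (g : G ⧸ Subgroup.upperCentralSeries G j) ^ n * y * ((g : G ⧸ Subgroup.upperCentralSeries G j) ^ n)⁻¹
        = (y : G ⧸ Subgroup.upperCentralSeries G j) := by
      have hcomm : (g : G ⧸ Subgroup.upperCentralSeries G j) ^ n * y = (y : G ⧸ Subgroup.upperCentralSeries G j) * (g : G ⧸ Subgroup.upperCentralSeries G j) ^ n :=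
        commutatorElement_eq_one_iff_mul_comm.mp (by rw [commutatorElement_def]; exact h5)
      rw [hcomm]; group
    rw [h6] at hkey
    have h7 : ((c : G ⧸ Subgroup.upperCentralSeries G j)) ^ n = 1 := by
      have := hkey
      -- y = c^n * y  ⟹  c^n = 1
      have h := mul_right_cancel (a := (c : G ⧸ Subgroup.upperCentralSeries G j) ^ n)
        (b := (y : G ⧸ Subgroup.upperCentralSeries G j)) (c := 1)
      exact h (by rw [one_mul, ← this])
    have h8 : c ^ n ∈ Subgroup.upperCentralSeries G j := by
      rw [← QuotientGroup.eq_one_iff]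
      rw [QuotientGroup.mk_pow]
      exact h7
    exact ih c n hn hcmem h8

/-- (Mal'cev) For a finitely generated torsion-free nilpotent group `G`, the quotient
`G / Z(G)` by the center is torsion-free. -/
theorem quotient_center_torsionFree {G : Type*} [Group G] [Group.IsNilpotent G]
    (hfg : Group.FG G) (htf : Monoid.IsTorsionFree G) :
    Monoid.IsTorsionFree (G ⧸ Subgroup.center G) := by
  intro q hq hfin
  obtain ⟨g, rfl⟩ := QuotientGroup.mk_surjective q
  obtain ⟨n, hn, hgn⟩ := isOfFinOrder_iff_pow_eq_one.mp hfin
  have hgn' : g ^ n ∈ Subgroup.center G := by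
    rw [← QuotientGroup.eq_one_iff]
    simpa using hgn
  have hcen : g ^ n ∈ Subgroup.upperCentralSeries G 1 := by
    rwa [upperCentralSeries_one]
  have key : ∀ k : ℕ, g ∈ Subgroup.upperCentralSeries G (k + 1) → g ∈ Subgroup.upperCentralSeries G 1 := by
    intro k
    induction k with
    | zero => exact id
    | succ k ihk =>
      intro hk
      have hmono : g ^ n ∈ Subgroup.upperCentralSeries G (k + 1) :=
        upperCentralSeries_mono G (Nat.one_le_iff_ne_zero.mpr (Nat.succ_ne_zero k)) hcen
      exact ihk (malcev_key htf (k + 1) g n hn.ne' hk hmono)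
  obtain ⟨m, hm⟩ := Group.IsNilpotent.nilpotent (G := G)
  have hgtop : g ∈ Subgroup.upperCentralSeries G (m + 1) := by
    have hle : Subgroup.upperCentralSeries G m ≤ Subgroup.upperCentralSeries G (m + 1) :=
      upperCentralSeries_mono G (Nat.le_succ m)
    rw [hm] at hle
    exact hle (Subgroup.mem_top g)
  have hfin' := key m hgtop
  rw [upperCentralSeries_one] at hfin'
  exact hq ((QuotientGroup.eq_one_iff g).mpr hfin')
end

section
/- Every finitely generated nilpotent group G has a finite-index subgroup N such that every conjugacy class of N that is not contained in the center of N is infinite. -/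
universe u

open scoped commutatorElement

lemma fg_subgroup_of_comm {A : Type*} [CommGroup A] [Group.FG A] (H : Subgroup A) : H.FG := by
  have h1 : Module.Finite ℤ (Additive A) := Module.Finite.iff_addGroup_fg.mpr inferInstance
  have h2 : IsNoetherian ℤ (Additive A) := isNoetherian_of_isNoetherianRing_of_finite ℤ _
  have h3 : (AddSubgroup.toIntSubmodule (Subgroup.toAddSubgroup H)).FG :=
    IsNoetherian.noetherian _
  rw [Submodule.fg_iff_addSubgroup_fg, AddSubgroup.toIntSubmodule_toAddSubgroup] at h3
  exact (Subgroup.fg_iff_add_fg H).mpr h3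

lemma subgroup_fg_map {G H : Type*} [Group G] [Group H] (f : G →* H) {P : Subgroup G}
    (h : P.FG) : (P.map f).FG := by
  rw [Subgroup.fg_iff] at h ⊢
  obtain ⟨S, hS, hfin⟩ := h
  exact ⟨f '' S, by rw [← MonoidHom.map_closure, hS], hfin.image f⟩





lemma group_fg_of_normal_of_quotient {G : Type*} [Group G] (K : Subgroup G) [K.Normal]
    (hK : K.FG) (hQ : Group.FG (G ⧸ K)) : Group.FG G := by
  rw [Subgroup.fg_iff] at hK
  obtain ⟨T, hT, hTfin⟩ := hK
  rw [Group.fg_iff] at hQ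
  obtain ⟨S, hS, hSfin⟩ := hQ
  have surj := QuotientGroup.mk'_surjective K
  choose f hf using surj
  rw [Group.fg_iff]
  refine ⟨f '' S ∪ T, ?_, (hSfin.image f).union hTfin⟩
  set P := Subgroup.closure (f '' S ∪ T) with hP
  have hKP : K ≤ P := by
    rw [← hT]
    exact Subgroup.closure_mono (Set.subset_union_right)
  have hmap : Subgroup.map (QuotientGroup.mk' K) P = ⊤ := by
    rw [hP, MonoidHom.map_closure, eq_top_iff, ← hS]
    apply Subgroup.closure_mono
    intro q hq
    exact ⟨f q, Set.subset_union_left (Set.mem_image_of_mem f hq), hf q⟩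
  have := Subgroup.comap_map_eq (QuotientGroup.mk' K) P
  rw [hmap, Subgroup.comap_top, QuotientGroup.ker_mk'] at this
  rw [eq_top_iff, this]
  exact sup_le le_rfl hKP


section
variable {G : Type*} [Group G]

lemma comm_id1 (a b g : G) : ⁅a * b, g⁆ = a * ⁅b, g⁆ * a⁻¹ * ⁅a, g⁆ := by
  simp only [commutatorElement_def]; group

lemma comm_id2 (a g : G) : ⁅a⁻¹, g⁆ = a⁻¹ * ⁅a, g⁆⁻¹ * a := by
  simp only [commutatorElement_def]; group

lemma comm_id3 (x g₁ g₂ : G) : ⁅x, g₁ * g₂⁆ = ⁅x, g₁⁆ * (g₁ * ⁅x, g₂⁆ * g₁⁻¹) := by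
  simp only [commutatorElement_def]; group

lemma comm_id4 (x g : G) : ⁅x, g⁻¹⁆ = g⁻¹ * ⁅x, g⁆⁻¹ * g := by
  simp only [commutatorElement_def]; group

lemma conj_central {z : G} (hz : z ∈ Subgroup.center G) (a : G) : a * z * a⁻¹ = z := by
  rw [Subgroup.mem_center_iff] at hz
  rw [hz a, mul_inv_cancel_right]

lemma comm_central_eq_one {z : G} (hz : z ∈ Subgroup.center G) (g : G) : ⁅z, g⁆ = 1 := by
  rw [Subgroup.mem_center_iff] at hz
  rw [commutatorElement_def, ← hz g]; group

lemma central_commutator_closure (P : Subgroup G) (S T : Set G)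
    (hS : Subgroup.closure S = ⊤) (hTP : Subgroup.closure T ≤ P)
    (hKP : ⁅P, (⊤ : Subgroup G)⁆ ≤ P)
    (hPT : P ≤ Subgroup.closure T ⊔ ⁅P, (⊤ : Subgroup G)⁆)
    (hcent : ⁅P, (⊤ : Subgroup G)⁆ ≤ Subgroup.center G) :
    ⁅P, (⊤ : Subgroup G)⁆ = Subgroup.closure {x | ∃ t ∈ T, ∃ s ∈ S, x = ⁅t, s⁆} := by
  set K := ⁅P, (⊤ : Subgroup G)⁆ with hK
  set R := Subgroup.closure {x | ∃ t ∈ T, ∃ s ∈ S, x = ⁅t, s⁆} with hR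
  have hZ : ∀ p ∈ P, ∀ g : G, ⁅p, g⁆ ∈ Subgroup.center G := fun p hp g =>
    hcent (Subgroup.commutator_mem_commutator hp (Subgroup.mem_top g))
  apply le_antisymm
  · rw [Subgroup.commutator_le]
    intro p hp g _
    -- main claim : every p in P satisfies p ∈ P ∧ ∀ g, ⁅p,g⁆ ∈ R
    have main : ∀ p ∈ Subgroup.closure (T ∪ (K : Set G)),
        p ∈ P ∧ ∀ g : G, ⁅p, g⁆ ∈ R := by
      intro x hx
      induction hx using Subgroup.closure_induction with
      | mem x hxmem =>
        rcases hxmem with hxT | hxK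
        · have hxP : x ∈ P := hTP (Subgroup.subset_closure hxT)
          refine ⟨hxP, ?_⟩
          intro g
          have hg : g ∈ Subgroup.closure S := by rw [hS]; exact Subgroup.mem_top g
          induction hg using Subgroup.closure_induction with
          | mem s hs => exact Subgroup.subset_closure ⟨x, hxT, s, hs, rfl⟩
          | one => rw [commutatorElement_one_right]; exact R.one_mem
          | mul g₁ g₂ hg₁ hg₂ ih₁ ih₂ =>
            rw [comm_id3, conj_central (hZ x hxP g₂) g₁]
            exact R.mul_mem ih₁ ih₂
          | inv g hg ih =>
            rw [comm_id4]
            have : g⁻¹ * ⁅x, g⁆⁻¹ * g = g⁻¹ * ⁅x, g⁆⁻¹ * (g⁻¹)⁻¹ := by rw [inv_inv]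
            rw [this, conj_central (Subgroup.center G |>.inv_mem (hZ x hxP g)) g⁻¹]
            exact R.inv_mem ih
        · have hxc : x ∈ Subgroup.center G := hcent hxK
          exact ⟨hKP hxK, fun g => by rw [comm_central_eq_one hxc]; exact R.one_mem⟩
      | one => exact ⟨P.one_mem, fun g => by rw [commutatorElement_one_left]; exact R.one_mem⟩
      | mul x y hx hy ihx ihy =>
        refine ⟨P.mul_mem ihx.1 ihy.1, fun g => ?_⟩
        rw [comm_id1, conj_central (hZ y ihy.1 g) x]
        exact R.mul_mem (ihy.2 g) (ihx.2 g)
      | inv x hx ihx =>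
        refine ⟨P.inv_mem ihx.1, fun g => ?_⟩
        rw [comm_id2]
        have : x⁻¹ * ⁅x, g⁆⁻¹ * x = x⁻¹ * ⁅x, g⁆⁻¹ * (x⁻¹)⁻¹ := by rw [inv_inv]
        rw [this, conj_central (Subgroup.center G |>.inv_mem (hZ x ihx.1 g)) x⁻¹]
        exact R.inv_mem (ihx.2 g)
    have hp' : p ∈ Subgroup.closure (T ∪ (K : Set G)) := by
      rw [Subgroup.closure_union, Subgroup.closure_eq]
      exact hPT hp
    exact (main p hp').2 g
  · rw [hR, Subgroup.closure_le]
    rintro x ⟨t, ht, s, hs, rfl⟩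
    exact Subgroup.commutator_mem_commutator (hTP (Subgroup.subset_closure ht))
      (Subgroup.mem_top s)
end



/-- Finitely generated nilpotent groups are Noetherian. -/
lemma noetherian_of_fg_of_lcs_bot : ∀ (n : ℕ) (G : Type u) [Group G] [Group.FG G],
    (⊤ : Subgroup G).lowerCentralSeries n = ⊥ → ∀ H : Subgroup G, H.FG := by
  intro n
  induction n with
  | zero =>
    intro G _ _ hbot H
    rw [lowerCentralSeries_zero] at hbot
    have : H = ⊥ := le_bot_iff.mp (hbot ▸ le_top)
    exact this ▸ ⟨∅, by simp [Subgroup.closure_empty]⟩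
  | succ n IHn =>
    intro G _ _ hbot H
    set K := (⊤ : Subgroup G).lowerCentralSeries n with hKdef
    have hKcent : K ≤ Subgroup.center G := by
      have hcomm : ⁅K, (⊤ : Subgroup G)⁆ = ⊥ := hbot
      have := Subgroup.commutator_eq_bot_iff_le_centralizer.mp hcomm
      rwa [Subgroup.coe_top, Subgroup.centralizer_univ] at this
    let π := QuotientGroup.mk' K
    have hπ : Function.Surjective π := QuotientGroup.mk'_surjective K
    have hmap : ∀ m, ((⊤ : Subgroup G).lowerCentralSeries m).map π = (⊤ : Subgroup (G ⧸ K)).lowerCentralSeries m := by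
      intro m
      induction m with
      | zero =>
        rw [lowerCentralSeries_zero, lowerCentralSeries_zero]
        exact Subgroup.map_top_of_surjective π hπ
      | succ m ih =>
        show (⁅(⊤ : Subgroup G).lowerCentralSeries m, (⊤ : Subgroup G)⁆).map π = ⁅(⊤ : Subgroup (G ⧸ K)).lowerCentralSeries m, ⊤⁆
        rw [Subgroup.map_commutator, ih, Subgroup.map_top_of_surjective π hπ]
    have hbar : (⊤ : Subgroup (G ⧸ K)).lowerCentralSeries n = ⊥ := by
      rw [← hmap n, Subgroup.map_eq_bot_iff, QuotientGroup.ker_mk']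
    have IH : ∀ H' : Subgroup (G ⧸ K), H'.FG := IHn (G ⧸ K) hbar
    -- K is finitely generated
    have hKfg : K.FG := by
      cases n with
      | zero => exact Group.fg_def.mp inferInstance
      | succ m =>
        set P := (⊤ : Subgroup G).lowerCentralSeries m with hPdef
        obtain ⟨S, hS, hSfin⟩ := Group.fg_iff.mp (inferInstance : Group.FG G)
        obtain ⟨Tq, hTq, hTqfin⟩ := (Subgroup.fg_iff _).mp (IH ((⊤ : Subgroup (G ⧸ K)).lowerCentralSeries m))
        have hsurj : ∀ x : Tq, ∃ p ∈ P, π p = (x : G ⧸ K) := by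
          rintro ⟨x, hx⟩
          have : x ∈ ((⊤ : Subgroup G).lowerCentralSeries m).map π := by
            rw [hmap m, ← hTq]; exact Subgroup.subset_closure hx
          obtain ⟨p, hp, hpx⟩ := this
          exact ⟨p, hp, hpx⟩
        choose g hg1 hg2 using hsurj
        haveI : Finite ↥Tq := hTqfin.to_subtype
        set T := Set.range g with hTdef
        have hTfin : T.Finite := Set.finite_range g
        have hTP : Subgroup.closure T ≤ P := by
          rw [Subgroup.closure_le]
          rintro _ ⟨x, rfl⟩; exact hg1 x
        have himg : π '' T = Tq := by
          ext y
          constructor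
          · rintro ⟨_, ⟨x, rfl⟩, rfl⟩; rw [hg2 x]; exact x.2
          · intro hy; exact ⟨g ⟨y, hy⟩, ⟨⟨y, hy⟩, rfl⟩, hg2 ⟨y, hy⟩⟩
        have hclT : (Subgroup.closure T).map π = (⊤ : Subgroup (G ⧸ K)).lowerCentralSeries m := by
          rw [MonoidHom.map_closure, himg, hTq]
        have hKP : ⁅P, (⊤ : Subgroup G)⁆ ≤ P := by
          exact Subgroup.lowerCentralSeries_antitone ⊤ (Nat.le_succ m)
        have hPT : P ≤ Subgroup.closure T ⊔ ⁅P, (⊤ : Subgroup G)⁆ := by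
          intro p hp
          have : π p ∈ (Subgroup.closure T).map π := by
            rw [hclT, ← hmap m]; exact Subgroup.mem_map_of_mem π hp
          obtain ⟨q, hq, hqa⟩ := this
          have hker : q⁻¹ * p ∈ ⁅P, (⊤ : Subgroup G)⁆ := by
            have : q⁻¹ * p ∈ π.ker := by
              rw [MonoidHom.mem_ker, map_mul, map_inv, hqa, inv_mul_cancel]
            rwa [QuotientGroup.ker_mk'] at this
          have := Subgroup.mul_mem_sup hq hker
          rwa [mul_inv_cancel_left] at this
        have hKcomm : K = ⁅P, (⊤ : Subgroup G)⁆ := rfl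
        have := central_commutator_closure P S T hS hTP hKP hPT (hKcomm ▸ hKcent)
        rw [← hKcomm] at this
        rw [Subgroup.fg_iff]
        refine ⟨_, this.symm, ?_⟩
        have : {x | ∃ t ∈ T, ∃ s ∈ S, x = ⁅t, s⁆} =
            (fun p : G × G => ⁅p.1, p.2⁆) '' (T ×ˢ S) := by
          ext x
          simp only [Set.mem_setOf_eq, Set.mem_image, Set.mem_prod, Prod.exists]
          constructor
          · rintro ⟨t, ht, s, hs, rfl⟩; exact ⟨t, s, ⟨ht, hs⟩, rfl⟩
          · rintro ⟨t, s, ⟨ht, hs⟩, rfl⟩; exact ⟨t, ht, s, hs, rfl⟩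
        rw [this]
        exact (hTfin.prod hSfin).image _
    -- now handle an arbitrary subgroup H
    letI : CommGroup ↥K :=
      { (inferInstance : Group ↥K) with
        mul_comm := fun a b => Subtype.ext (Subgroup.mem_center_iff.mp (hKcent b.2) (a : G)) }
    haveI : Group.FG ↥K := (Group.fg_iff_subgroup_fg K).mpr hKfg
    have hHK : (H ⊓ K).FG := by
      have h0 : ((H ⊓ K).subgroupOf K).FG := fg_subgroup_of_comm ((H ⊓ K).subgroupOf K)
      have h1 := subgroup_fg_map K.subtype h0
      rwa [Subgroup.subgroupOf_map_subtype, inf_assoc, inf_idem] at h1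
    let φ : ↥H →* G ⧸ K := π.comp H.subtype
    have hker : φ.ker = K.subgroupOf H := by
      rw [← MonoidHom.comap_ker, QuotientGroup.ker_mk']; rfl
    have hkerfg : φ.ker.FG := by
      rw [hker]
      have hmapeq : (K.subgroupOf H).map H.subtype = K ⊓ H := Subgroup.subgroupOf_map_subtype K H
      have : Group.FG ↥(K ⊓ H) := (Group.fg_iff_subgroup_fg _).mpr (inf_comm H K ▸ hHK)
      let e := Subgroup.equivMapOfInjective (K.subgroupOf H) H.subtype H.subtype_injective
      rw [hmapeq] at e
      have : Group.FG ↥(K.subgroupOf H) :=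
        Group.fg_of_surjective (f := e.symm.toMonoidHom) e.symm.surjective
      exact (Group.fg_iff_subgroup_fg _).mp this
    have hquot : Group.FG (↥H ⧸ φ.ker) := by
      have hrfg : Group.FG ↥φ.range := (Group.fg_iff_subgroup_fg _).mpr (IH φ.range)
      let e := QuotientGroup.quotientKerEquivRange φ
      exact Group.fg_of_surjective (f := e.symm.toMonoidHom) e.symm.surjective
    have : Group.FG ↥H := group_fg_of_normal_of_quotient φ.ker hkerfg hquot
    exact (Group.fg_iff_subgroup_fg H).mp this




/-- Every finitely generated nilpotent group has a finite-index subgroup `N` such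
that every non-central conjugacy class of `N` is infinite. -/

theorem exists_finiteIndex_subgroup_noncentral_classes_infinite {G : Type*} [Group G]
    [Group.IsNilpotent G] (hfg : Group.FG G) :
    ∃ N : Subgroup G, N.FiniteIndex ∧
      ∀ x : ↥N, x ∉ Subgroup.center ↥N → {y : ↥N | IsConj x y}.Infinite := by
  haveI := hfg
  obtain ⟨n, hn⟩ := nilpotent_iff_lowerCentralSeries.mp ‹Group.IsNilpotent G›
  -- the FC-center: elements whose centralizer has finite index
  let F : Subgroup G :=
    { carrier := {x | (Subgroup.centralizer {x}).FiniteIndex}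
      one_mem' := by
        have : Subgroup.centralizer {(1 : G)} = ⊤ := by
          rw [eq_top_iff]; intro g _
          rw [Subgroup.mem_centralizer_iff]
          rintro y rfl; simp
        show (Subgroup.centralizer {(1 : G)}).FiniteIndex
        rw [this]; infer_instance
      mul_mem' := by
        rintro a b (ha : (Subgroup.centralizer {a}).FiniteIndex)
          (hb : (Subgroup.centralizer {b}).FiniteIndex)
        show (Subgroup.centralizer {a * b}).FiniteIndex
        haveI := ha; haveI := hb
        refine Subgroup.finiteIndex_of_le (H := Subgroup.centralizer {a} ⊓ Subgroup.centralizer {b}) ?_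
        intro g hg
        obtain ⟨hga, hgb⟩ := Subgroup.mem_inf.mp hg
        rw [Subgroup.mem_centralizer_iff] at hga hgb ⊢
        rintro y rfl
        have h1 := hga a rfl
        have h2 := hgb b rfl
        calc a * b * g = a * (b * g) := by rw [mul_assoc]
          _ = a * (g * b) := by rw [h2]
          _ = a * g * b := by rw [mul_assoc]
          _ = g * (a * b) := by rw [h1, mul_assoc]
      inv_mem' := by
        rintro a (ha : (Subgroup.centralizer {a}).FiniteIndex)
        show (Subgroup.centralizer {a⁻¹}).FiniteIndex
        haveI := ha
        refine Subgroup.finiteIndex_of_le (H := Subgroup.centralizer {a}) ?_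
        intro g hg
        rw [Subgroup.mem_centralizer_iff] at hg ⊢
        rintro y rfl
        have h1 := hg a rfl
        calc a⁻¹ * g = a⁻¹ * g * a * a⁻¹ := by group
          _ = a⁻¹ * (g * a) * a⁻¹ := by group
          _ = a⁻¹ * (a * g) * a⁻¹ := by rw [← h1]
          _ = g * a⁻¹ := by group }
  have hFfg : F.FG := noetherian_of_fg_of_lcs_bot n G hn F
  obtain ⟨T, hT, hTfin⟩ := (Subgroup.fg_iff F).mp hFfg
  have hTF : ∀ t ∈ T, (Subgroup.centralizer {t}).FiniteIndex := fun t ht =>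
    (hT ▸ Subgroup.subset_closure ht : t ∈ F)
  haveI : Finite ↥T := hTfin.to_subtype
  let M : Subgroup G := ⨅ t : T, Subgroup.centralizer {(t : G)}
  haveI hMfin : M.FiniteIndex := by
    haveI : ∀ t : T, (Subgroup.centralizer {(t : G)}).FiniteIndex := fun t => hTF t t.2
    exact Subgroup.finiteIndex_iInf (fun t : T => hTF t t.2)
  set N := Subgroup.centralizer (F : Set G) with hN
  have hMN : M ≤ N := by
    intro g hg
    rw [Subgroup.mem_centralizer_iff]
    intro f hf
    have hFle : F ≤ Subgroup.centralizer {g} := by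
      rw [← hT, Subgroup.closure_le]
      intro t ht
      show t ∈ Subgroup.centralizer {g}
      have hgt := Subgroup.mem_iInf.mp hg ⟨t, ht⟩
      rw [Subgroup.mem_centralizer_iff] at hgt ⊢
      rintro y rfl
      exact (hgt t rfl).symm
    have hfg' := hFle hf
    rw [Subgroup.mem_centralizer_iff] at hfg'
    exact (hfg' g rfl).symm
  haveI hNfin : N.FiniteIndex := Subgroup.finiteIndex_of_le hMN
  refine ⟨N, hNfin, fun x hx => ?_⟩
  by_contra hinf
  rw [Set.not_infinite] at hinf
  have horb : (MulAction.orbit (ConjAct ↥N) x).Finite := by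
    have heq : MulAction.orbit (ConjAct ↥N) x = {y : ↥N | IsConj x y} := by
      ext y
      rw [Set.mem_setOf_eq, ConjAct.mem_orbit_conjAct, isConj_comm]
    rw [heq]; exact hinf
  have hidx : (MulAction.stabilizer (ConjAct ↥N) x).index ≠ 0 := by
    rw [MulAction.index_stabilizer]
    intro h0
    have hne : (MulAction.orbit (ConjAct ↥N) x).Nonempty := ⟨x, MulAction.mem_orbit_self x⟩
    have hpos := (Set.ncard_pos horb).mpr hne
    rw [h0] at hpos
    exact lt_irrefl 0 hpos
  have hcidx : (Subgroup.centralizer {x} : Subgroup ↥N).index ≠ 0 := by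
    rw [Subgroup.centralizer_eq_comap_stabilizer]
    exact (Subgroup.index_comap_of_surjective _ ConjAct.toConjAct.surjective).trans_ne hidx
  set C := Subgroup.centralizer {(x : G)} with hC
  have hsub : C.subgroupOf N = Subgroup.centralizer {x} := by
    ext m
    rw [Subgroup.mem_subgroupOf]
    rw [hC, Subgroup.mem_centralizer_iff, Subgroup.mem_centralizer_iff]
    simp only [Set.mem_singleton_iff, forall_eq]
    exact ⟨fun h => Subtype.ext h, fun h => congrArg Subtype.val h⟩
  have hCfin : C.FiniteIndex := by
    have h1 : (C ⊓ N).relIndex N ≠ 0 := by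
      rw [Subgroup.relIndex, Subgroup.inf_subgroupOf_right, hsub]
      exact hcidx
    have h2 : N.index ≠ 0 := hNfin.index_ne_zero
    have hmul := Subgroup.relIndex_mul_index (inf_le_right : C ⊓ N ≤ N)
    have h3 : (C ⊓ N).index ≠ 0 := by rw [← hmul]; exact mul_ne_zero h1 h2
    have hdvd := Subgroup.index_dvd_of_le (inf_le_left : C ⊓ N ≤ C)
    refine ⟨fun h0 => h3 ?_⟩
    rw [h0] at hdvd
    exact zero_dvd_iff.mp hdvd
  have hxF : (x : G) ∈ F := hCfin
  apply hx
  rw [Subgroup.mem_center_iff]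
  intro m
  have hm : (m : G) ∈ Subgroup.centralizer (F : Set G) := m.2
  rw [Subgroup.mem_centralizer_iff] at hm
  exact Subtype.ext (hm (x : G) hxF).symm
end
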